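/- A finite-index subgroup of a finitely presented group is finitely presented. -/

import Mathlib

/-- A group is finitely presented if it is isomorphic to a presented group on
finitely many generators with finitely many relations. -/
def Group.FinitelyPresented (G : Type*) [Group G] : Prop :=
  ∃ (n : ℕ) (rels : Set (FreeGroup (Fin n))), rels.Finite ∧
    Nonempty (PresentedGroup rels ≃* G)

/-!
Pull `H` back along a finite presentation `φ : F → G` to the finite-index subgroup `K = φ⁻¹(H)` of
the free group `F`. By Schreier's lemma and Nielsen–Schreier, `K` is free of finite rank, and
`φ : K → H` is onto with kernel `N ∩ K`, where `N` is the normal closure of the finitely many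
relators. Conjugating the relators by a finite transversal of `K` gives finitely many elements of `K`
whose normal closure in `K` is `N ∩ K`.
-/

theorem FreeGroup.finite_of_fg {α : Type*} [Group.FG (FreeGroup α)] : Finite α := by
  have : Group.FG (Abelianization (FreeGroup α)) :=
    inferInstanceAs (Group.FG (FreeGroup α ⧸ commutator (FreeGroup α)))
  have : Module.Finite ℤ (FreeAbelianGroup α) :=
    Module.Finite.iff_addGroup_fg.mpr (inferInstanceAs (AddGroup.FG (Additive _)))
  exact Module.Finite.finite_basis (FreeAbelianGroup.basis α)

theorem IsFreeGroup.isFinitelyPresented_of_fg {G : Type*} [Group G] [IsFreeGroup G]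
    [Group.FG G] : Group.IsFinitelyPresented G := by
  have : Group.FG (FreeGroup (Generators G)) :=
    Group.fg_of_surjective (f := (toFreeGroup G).toMonoidHom) (toFreeGroup G).surjective
  have := FreeGroup.finite_of_fg (α := Generators G)
  exact .equiv (toFreeGroup G).symm

theorem Group.finitelyPresented_iff_isFinitelyPresented {G : Type*} [Group G] :
    Group.FinitelyPresented G ↔ Group.IsFinitelyPresented G := by
  constructor
  · rintro ⟨n, rels, hrels, ⟨e⟩⟩
    have : Finite rels := hrels
    exact .equiv e
  · intro _
    obtain ⟨n, rels, hrels, ⟨e⟩⟩ := IsFinitelyPresented.exists_mulEquiv_presentedGroup (G := G)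
    exact ⟨n, rels, hrels, ⟨e.symm⟩⟩

theorem MonoidHom.ker_subgroupComap {G G' : Type*} [Group G] [Group G'] (f : G →* G')
    (H : Subgroup G') : (f.subgroupComap H).ker = f.ker.subgroupOf (H.comap f) := by
  ext x
  rw [mem_ker, Subgroup.mem_subgroupOf, mem_ker, ← Subtype.val_inj]
  rfl

open Subgroup in
theorem Subgroup.IsFinitelyNormallyGenerated.subgroupOf {G : Type*} [Group G]
    {N K : Subgroup G} (hN : N.IsFinitelyNormallyGenerated) (hNK : N ≤ K) [K.FiniteIndex] :
    (N.subgroupOf K).IsFinitelyNormallyGenerated := by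
  obtain ⟨S, hS, rfl⟩ := hN
  let T : Set G := Set.range fun q : G ⧸ K => q.out
  let S' : Set K := K.subtype ⁻¹' Set.image2 (fun t s => t⁻¹ * s * t) T S
  refine ⟨S', ((Set.finite_range _).image2 _ hS).preimage K.subtype_injective.injOn, ?_⟩
  apply le_antisymm
  · refine normalClosure_le_normal fun x hx => ?_
    obtain ⟨t, -, s, hs, hx⟩ := hx
    rw [SetLike.mem_coe, mem_subgroupOf, ← coe_subtype, ← hx]
    exact normalClosure_normal.conj_mem' _ (subset_normalClosure hs) t
  · suffices h : normalClosure S ≤ (normalClosure S').map K.subtype by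
      rw [Subgroup.subgroupOf,
        ← comap_map_eq_self_of_injective K.subtype_injective (normalClosure S')]
      exact comap_mono h
    rw [normalClosure, closure_le]
    intro x hx
    obtain ⟨s, hs, hx⟩ := Group.mem_conjugatesOfSet_iff.mp hx
    obtain ⟨c, rfl⟩ := isConj_iff.mp hx
    -- With `t` the representative of `c⁻¹K`, we have `c = k t⁻¹` for some `k ∈ K`,
    -- so `c s c⁻¹` is the `k`-conjugate of `t⁻¹ s t ∈ S'`.
    obtain ⟨k, hk⟩ := QuotientGroup.mk_out_eq_mul K c⁻¹
    set t := ((c⁻¹ : G) : G ⧸ K).out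
    have hts : t⁻¹ * s * t ∈ K :=
      hNK (normalClosure_normal.conj_mem' _ (subset_normalClosure hs) t)
    have hmem : (⟨t⁻¹ * s * t, hts⟩ : K) ∈ S' := ⟨t, ⟨_, rfl⟩, s, hs, rfl⟩
    refine ⟨k * ⟨_, hts⟩ * k⁻¹, normalClosure_normal.conj_mem _ (subset_normalClosure hmem) k, ?_⟩
    simp only [map_mul, map_inv, coe_subtype, hk]
    group

theorem Group.IsFinitelyPresented.of_finiteIndex {G : Type*} [Group G]
    [Group.IsFinitelyPresented G] (H : Subgroup G) [H.FiniteIndex] :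
    Group.IsFinitelyPresented H := by
  obtain ⟨n, φ, hφ, hker⟩ := ‹Group.IsFinitelyPresented G›
  have : (H.comap φ).FiniteIndex :=
    ⟨by rw [H.index_comap_of_surjective hφ]; exact Subgroup.FiniteIndex.index_ne_zero⟩
  have : Group.IsFinitelyPresented (H.comap φ) := IsFreeGroup.isFinitelyPresented_of_fg
  refine .of_surjective (φ.subgroupComap H) (φ.subgroupComap_surjective_of_surjective H hφ) ?_
  rw [MonoidHom.ker_subgroupComap]
  exact hker.subgroupOf fun x hx => by simp [MonoidHom.mem_ker.mp hx]

theorem fp_of_finiteIndex_subgroup {G : Type*} [Group G] (H : Subgroup G)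
    (hidx : H.FiniteIndex) (hG : Group.FinitelyPresented G) :
    Group.FinitelyPresented H := by
  rw [Group.finitelyPresented_iff_isFinitelyPresented] at hG ⊢
  exact .of_finiteIndex H
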